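/- arXiv:2602.09726 — 2 statements merged into one kernel-verified Lean document; each statement's English description precedes it below -/
import Mathlib

section
/- For all r ∈ ℝ, the extended ratio function is pointwise bounded by the clipped ratio outside the clipping range and below the identity above it: if r > 1+ε then (1+ε) ≤ ξ(r) < r, and if r < 1-ε then r < ξ(r) ≤ 1-ε. -/
theorem xi_between (ε α : ℝ) (hε : 0 < ε) (hα : 0 < α) (ξ : ℝ → ℝ)
    (h1 : ∀ r : ℝ, r < 1 - ε → ξ r = (1 - ε) - (1 - Real.exp (α * (ε + (r - 1)))) / α)
    (h2 : ∀ r : ℝ, 1 - ε ≤ r → r ≤ 1 + ε → ξ r = r)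
    (h3 : ∀ r : ℝ, 1 + ε < r → ξ r = (1 + ε) + (1 - Real.exp (α * (ε - (r - 1)))) / α) :
    ∀ r : ℝ, (1 + ε < r → (1 + ε) ≤ ξ r ∧ ξ r < r) ∧
      (r < 1 - ε → r < ξ r ∧ ξ r ≤ 1 - ε) := by
  intro r
  constructor
  · intro hr
    rw [h3 r hr]
    set x := α * (ε - (r - 1)) with hx
    have hxneg : x < 0 := by
      have : ε - (r - 1) < 0 := by linarith
      exact mul_neg_of_pos_of_neg hα this
    have hexp1 : Real.exp x < 1 := Real.exp_lt_one_iff.mpr hxneg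
    have hlow : x + 1 < Real.exp x := Real.add_one_lt_exp (ne_of_lt hxneg)
    constructor
    · have : 0 < (1 - Real.exp x) / α := div_pos (by linarith) hα
      linarith
    · have h1x : (1 - Real.exp x) / α < -x / α :=
        (div_lt_div_iff_of_pos_right hα).mpr (by linarith)
      have : -x / α = r - 1 - ε := by rw [hx]; field_simp; ring
      linarith [h1x, this]
  · intro hr
    rw [h1 r hr]
    set x := α * (ε + (r - 1)) with hx
    have hxneg : x < 0 := by
      have : ε + (r - 1) < 0 := by linarith
      exact mul_neg_of_pos_of_neg hα this
    have hexp1 : Real.exp x < 1 := Real.exp_lt_one_iff.mpr hxneg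
    have hlow : x + 1 < Real.exp x := Real.add_one_lt_exp (ne_of_lt hxneg)
    constructor
    · have h1x : (1 - Real.exp x) / α < -x / α :=
        (div_lt_div_iff_of_pos_right hα).mpr (by linarith)
      have : -x / α = -(ε + (r - 1)) := by rw [hx]; field_simp
      linarith [h1x]
    · have : 0 < (1 - Real.exp x) / α := div_pos (by linarith) hα
      linarith
end

section
/- The extended ratio function is 1-Lipschitz on ℝ: for all r, r' ∈ ℝ, |ξ(r) − ξ(r')| ≤ |r − r'|. -/
/-!
On `(-∞, 1 - ε]` and `[1 + ε, ∞)` the function `ξ` is an exponential whose slope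
`exp (α * ·)` is evaluated at nonpositive arguments, hence lies in `(0, 1]`; in between it is the
identity. So both `ξ` and `r ↦ r - ξ r` are monotone on each of the three closed pieces, and, since
the pieces share their endpoints, on all of `ℝ`. This says exactly that
`0 ≤ ξ r' - ξ r ≤ r' - r` for `r ≤ r'`.
-/

open Real Set

theorem exp_sub_exp_le_sub_of_nonpos {a b : ℝ} (hab : a ≤ b) (hb : b ≤ 0) :
    exp b - exp a ≤ b - a := by
  have h_tangent : exp b * (1 + (a - b)) ≤ exp b * exp (a - b) :=
    mul_le_mul_of_nonneg_left (by linarith [add_one_le_exp (a - b)]) (exp_pos b).le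
  rw [← exp_add, add_sub_cancel] at h_tangent
  nlinarith [exp_le_one_iff.mpr hb]

theorem Monotone.of_monotoneOn_Iic_Icc_Ici {f : ℝ → ℝ} {a b : ℝ} (hab : a ≤ b)
    (h₁ : MonotoneOn f (Iic a)) (h₂ : MonotoneOn f (Icc a b)) (h₃ : MonotoneOn f (Ici b)) :
    Monotone f := by
  have h₁₂ := h₁.union_right h₂ isGreatest_Iic (isLeast_Icc hab)
  rw [Iic_union_Icc_eq_Iic hab] at h₁₂
  exact h₁₂.Iic_union_Ici h₃

theorem abs_sub_le_of_monotone_of_monotone_id_sub {f : ℝ → ℝ} (hf : Monotone f)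
    (hf' : Monotone fun x => x - f x) (x y : ℝ) : |f x - f y| ≤ |x - y| := by
  wlog hxy : x ≤ y generalizing x y
  · rw [abs_sub_comm, abs_sub_comm x]
    exact this y x (le_of_not_ge hxy)
  have h_mono := hf hxy
  have h_short := hf' hxy
  rw [abs_sub_comm, abs_sub_comm x, abs_of_nonneg (by linarith), abs_of_nonneg (by linarith)]
  linarith

section ExponentialPieces

variable {α c : ℝ} {f : ℝ → ℝ}

theorem monotoneOn_Iic_of_eq_exp (hα : 0 < α)
    (hf : ∀ r ≤ c, f r = c - (1 - exp (α * (r - c))) / α) :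
    MonotoneOn f (Iic c) ∧ MonotoneOn (fun r => r - f r) (Iic c) := by
  have h_diff : ∀ x y, x ≤ c → y ≤ c →
      f y - f x = (exp (α * (y - c)) - exp (α * (x - c))) / α := by
    intro x y hx hy
    rw [hf x hx, hf y hy]
    ring
  constructor
  · intro x hx y hy hxy
    have h_exp : exp (α * (x - c)) ≤ exp (α * (y - c)) := by gcongr
    rw [← sub_nonneg, h_diff x y hx hy]
    exact div_nonneg (by linarith) hα.le
  · intro x hx y hy hxy
    have h_exp := exp_sub_exp_le_sub_of_nonpos (by gcongr : α * (x - c) ≤ α * (y - c))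
      (mul_nonpos_of_nonneg_of_nonpos hα.le (sub_nonpos.mpr hy))
    have : f y - f x ≤ y - x := by
      rw [h_diff x y hx hy, div_le_iff₀ hα]
      linarith
    show x - f x ≤ y - f y
    linarith

theorem monotoneOn_Ici_of_eq_exp (hα : 0 < α)
    (hf : ∀ r, c ≤ r → f r = c + (1 - exp (α * (c - r))) / α) :
    MonotoneOn f (Ici c) ∧ MonotoneOn (fun r => r - f r) (Ici c) := by
  have h_diff : ∀ x y, c ≤ x → c ≤ y →
      f y - f x = (exp (α * (c - x)) - exp (α * (c - y))) / α := by
    intro x y hx hy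
    rw [hf x hx, hf y hy]
    ring
  constructor
  · intro x hx y hy hxy
    have h_exp : exp (α * (c - y)) ≤ exp (α * (c - x)) := by gcongr
    rw [← sub_nonneg, h_diff x y hx hy]
    exact div_nonneg (by linarith) hα.le
  · intro x hx y hy hxy
    have h_exp := exp_sub_exp_le_sub_of_nonpos (by gcongr : α * (c - y) ≤ α * (c - x))
      (mul_nonpos_of_nonneg_of_nonpos hα.le (sub_nonpos.mpr hx))
    have : f y - f x ≤ y - x := by
      rw [h_diff x y hx hy, div_le_iff₀ hα]
      linarith
    show x - f x ≤ y - f y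
    linarith

end ExponentialPieces

theorem xi_lipschitz (ε α : ℝ) (hε : 0 < ε) (hα : 0 < α) (ξ : ℝ → ℝ)
    (h1 : ∀ r : ℝ, r < 1 - ε → ξ r = (1 - ε) - (1 - Real.exp (α * (ε + (r - 1)))) / α)
    (h2 : ∀ r : ℝ, 1 - ε ≤ r → r ≤ 1 + ε → ξ r = r)
    (h3 : ∀ r : ℝ, 1 + ε < r → ξ r = (1 + ε) + (1 - Real.exp (α * (ε - (r - 1)))) / α) :
    ∀ r r' : ℝ, |ξ r - ξ r'| ≤ |r - r'| := by
  have h_lower : ∀ r ≤ 1 - ε, ξ r = (1 - ε) - (1 - exp (α * (r - (1 - ε)))) / α := by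
    intro r hr
    rcases hr.lt_or_eq with hr | rfl
    · rw [h1 r hr]; ring_nf
    · simp [h2 _ le_rfl (by linarith)]
  have h_upper : ∀ r, 1 + ε ≤ r → ξ r = (1 + ε) + (1 - exp (α * ((1 + ε) - r))) / α := by
    intro r hr
    rcases hr.lt_or_eq with hr | rfl
    · rw [h3 r hr]; ring_nf
    · simp [h2 _ (by linarith) le_rfl]
  have h_middle : EqOn id ξ (Icc (1 - ε) (1 + ε)) := fun r hr => (h2 r hr.1 hr.2).symm
  have h_middle' : EqOn (fun _ => 0) (fun r => r - ξ r) (Icc (1 - ε) (1 + ε)) := fun r hr => by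
    simp [h2 r hr.1 hr.2]
  obtain ⟨h_mono₁, h_short₁⟩ := monotoneOn_Iic_of_eq_exp hα h_lower
  obtain ⟨h_mono₃, h_short₃⟩ := monotoneOn_Ici_of_eq_exp hα h_upper
  have hle : 1 - ε ≤ 1 + ε := by linarith
  exact abs_sub_le_of_monotone_of_monotone_id_sub
    (.of_monotoneOn_Iic_Icc_Ici hle h_mono₁ (monotoneOn_id.congr h_middle) h_mono₃)
    (.of_monotoneOn_Iic_Icc_Ici hle h_short₁ (monotoneOn_const.congr h_middle') h_short₃)
end
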